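/- Let m ≥ 1 be an integer. For every real r with 0 < r ≤ m, one has J_{m+1/2}(r) > J_{m+3/2}(r), where J_α is the Bessel function of the first kind defined by its power series. -/

import Mathlib

/-!
Write `J_ν(x) = (x/2)^ν F_ν((x/2)²)` with the entire series
`F_ν(t) = ∑ (-1)^k t^k / (k! Γ(k+ν+1))`. Termwise, `F_ν' = -F_{ν+1}` and
`F_ν = (ν+1) F_{ν+1} - t F_{ν+2}`, so with `P(x) = F_ν(x²)`, `Q(x) = F_{ν+1}(x²)` the gap
`h = P - x Q` satisfies `h' = (2ν+1-2x) Q - 2P`, while `(e^{2x} P)' = 2 e^{2x} h`.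
Now `h(0) = 1/Γ(ν+1) > 0`. As long as `h > 0`, `e^{2x} P` increases, so `P > 0`; hence at
a first zero `x₀` of `h` we get `Q(x₀) = P(x₀)/x₀ > 0` and `h'(x₀) = (2ν+1-4x₀) Q(x₀) > 0`,
impossible for `x₀ < (2ν+1)/4`. Thus `J_{ν+1}(x) < J_ν(x)` for `0 < x < ν + 1/2`; take
`ν = m + 1/2`.
-/

open Real

/-- Bessel function of the first kind, defined by its power series. -/
noncomputable def besselJ (α : ℝ) (x : ℝ) : ℝ :=
  ∑' k : ℕ,
    ((-1 : ℝ) ^ k / ((Nat.factorial k : ℝ) * Real.Gamma ((k : ℝ) + α + 1))) *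
      (x / 2) ^ (2 * (k : ℝ) + α)

open Filter Topology Set Nat

theorem hasDerivAt_tsum_mul_pow {c : ℕ → ℝ} (hc : ∀ R, Summable fun k => ‖c k‖ * R ^ k)
    (t : ℝ) :
    HasDerivAt (fun x => ∑' k, c k * x ^ k) (∑' k, (k + 1) * c (k + 1) * t ^ k) t := by
  set R := |t| + 1
  have hR : 0 < R := by positivity
  have ht : t ∈ Metric.ball (0 : ℝ) R := by simp [R]
  have hbound : ∀ k, ∀ y ∈ Metric.ball (0 : ℝ) R,
      ‖c k * (k * y ^ (k - 1))‖ ≤ ‖c k‖ * (2 * R) ^ k / R := by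
    intro k y hy
    rw [mem_ball_zero_iff] at hy
    have hpow : (k : ℝ) * R ^ (k - 1) * R ≤ (2 * R) ^ k := by
      rcases k with _ | k
      · simp
      rw [mul_assoc, Nat.add_sub_cancel, ← pow_succ, mul_pow]
      gcongr
      exact_mod_cast (Nat.lt_two_pow_self).le
    rw [norm_mul, norm_mul, norm_pow, Real.norm_natCast, mul_div_assoc]
    refine mul_le_mul_of_nonneg_left ?_ (norm_nonneg _)
    rw [le_div_iff₀ hR]
    calc (k : ℝ) * ‖y‖ ^ (k - 1) * R ≤ k * R ^ (k - 1) * R := by gcongr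
      _ ≤ (2 * R) ^ k := hpow
  have hderiv := hasDerivAt_tsum_of_isPreconnected ((hc (2 * R)).div_const R) Metric.isOpen_ball
    (convex_ball _ _).isPreconnected
    (fun k y _ => by simpa using (hasDerivAt_pow k y).const_mul (c k)) hbound ht
    (Summable.of_norm (by simpa [norm_mul, norm_pow] using hc ‖t‖)) ht
  have hshift : ∑' k, c k * (k * t ^ (k - 1)) = ∑' k, (k + 1) * c (k + 1) * t ^ k := by
    rw [(Summable.of_norm_bounded ((hc (2 * R)).div_const R) fun k =>
      hbound k t ht).tsum_eq_zero_add]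
    simp only [CharP.cast_eq_zero, zero_mul, mul_zero, zero_add, Nat.cast_add, Nat.cast_one,
      Nat.add_sub_cancel]
    exact tsum_congr fun k => by ring
  exact hshift ▸ hderiv

theorem pos_of_deriv_pos_at_first_zero {f f' : ℝ → ℝ} {a b : ℝ}
    (hf : ∀ x ∈ Icc a b, HasDerivAt f (f' x) x) (ha : 0 < f a)
    (hzero : ∀ x ∈ Ioc a b, f x = 0 → (∀ y ∈ Ico a x, 0 < f y) → 0 < f' x) :
    ∀ x ∈ Icc a b, 0 < f x := by
  by_contra! hneg
  have hclosed : IsClosed (Icc a b ∩ f ⁻¹' Iic 0) :=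
    ContinuousOn.preimage_isClosed_of_isClosed
      (fun x hx => (hf x hx).continuousAt.continuousWithinAt) isClosed_Icc isClosed_Iic
  obtain ⟨x₀, ⟨hx₀, hfx₀⟩, hleast⟩ :=
    (isCompact_Icc.of_isClosed_subset hclosed inter_subset_left).exists_isLeast hneg
  have hpos : ∀ y ∈ Ico a x₀, 0 < f y := fun y hy => by
    by_contra! hfy
    exact (hleast ⟨⟨hy.1, hy.2.le.trans hx₀.2⟩, hfy⟩).not_gt hy.2
  have hax₀ : a < x₀ := hx₀.1.lt_of_ne (by rintro rfl; exact hfx₀.not_gt ha)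
  have hleft : Ico a x₀ ∈ 𝓝[<] x₀ := Ico_mem_nhdsLT hax₀
  have hfx₀_eq : f x₀ = 0 := le_antisymm hfx₀ <|
    ge_of_tendsto ((hf x₀ hx₀).continuousAt.tendsto.mono_left nhdsWithin_le_nhds)
      (eventually_of_mem hleft fun y hy => (hpos y hy).le)
  have hslope := (hasDerivAt_iff_tendsto_slope_left_right.1 (hf x₀ hx₀)).1.eventually
    (eventually_gt_nhds (hzero x₀ ⟨hax₀, hx₀.2⟩ hfx₀_eq hpos))
  obtain ⟨y, hy, hy_slope⟩ := (eventually_of_mem hleft fun y hy => hy).and hslope |>.exists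
  exact (neg_of_slope_pos hy.2 hy_slope hfx₀_eq).not_gt (hpos y hy)

noncomputable def besselCoeff (ν : ℝ) (k : ℕ) : ℝ :=
  (-1) ^ k / (k ! * Gamma (k + ν + 1))

noncomputable def besselSeries (ν t : ℝ) : ℝ :=
  ∑' k, besselCoeff ν k * t ^ k

-- Also true at the poles `s = 0, -1, -2, …`, where Mathlib's `Gamma` and both sides are `0`.
theorem Real.one_div_Gamma_eq_div_Gamma_add_one (s : ℝ) : 1 / Gamma s = s / Gamma (s + 1) := by
  rcases eq_or_ne s 0 with rfl | hs
  · simp [Gamma_zero]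
  rw [Gamma_add_one hs, ← div_div, div_self hs]

theorem succ_mul_besselCoeff_succ (ν : ℝ) (k : ℕ) :
    (k + 1) * besselCoeff ν (k + 1) = -besselCoeff (ν + 1) k := by
  have hk : (k : ℝ) + 1 ≠ 0 := by positivity
  simp only [besselCoeff, factorial_succ, cast_mul, cast_add, cast_one, pow_succ,
    show (k : ℝ) + 1 + ν + 1 = k + (ν + 1) + 1 by ring]
  rw [mul_assoc, mul_div_assoc', mul_div_mul_left _ _ hk]
  ring

theorem besselCoeff_eq_mul_besselCoeff_add_one (ν : ℝ) (k : ℕ) :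
    besselCoeff ν k = (k + ν + 1) * besselCoeff (ν + 1) k := by
  have h := one_div_Gamma_eq_div_Gamma_add_one (k + ν + 1)
  simp only [besselCoeff, show (k : ℝ) + (ν + 1) + 1 = k + ν + 1 + 1 by ring]
  rw [div_mul_eq_div_div, div_mul_eq_div_div, div_eq_mul_one_div _ (Gamma _), h,
    div_eq_mul_one_div _ (Gamma (_ + 1))]
  ring

theorem abs_besselCoeff_succ_le {ν : ℝ} (hν : 0 ≤ ν) (k : ℕ) :
    |besselCoeff ν (k + 1)| ≤ |besselCoeff ν k| / (k + 1) := by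
  have h : ((k + 1) * (k + ν + 1)) * besselCoeff ν (k + 1) = -besselCoeff ν k := by
    rw [besselCoeff_eq_mul_besselCoeff_add_one ν k]
    linear_combination (k + ν + 1) * succ_mul_besselCoeff_succ ν k
  have h1 : (1 : ℝ) ≤ k + ν + 1 := by linarith [(k.cast_nonneg : (0 : ℝ) ≤ k)]
  have hpos : (0 : ℝ) < (k + 1) * (k + ν + 1) := by positivity
  rw [le_div_iff₀ (by positivity)]
  calc |besselCoeff ν (k + 1)| * (k + 1)
      ≤ |besselCoeff ν (k + 1)| * ((k + 1) * (k + ν + 1)) := by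
        gcongr; exact le_mul_of_one_le_right (by positivity) h1
    _ = |besselCoeff ν k| := by
        rw [← abs_neg (besselCoeff ν k), ← h, abs_mul, abs_of_pos hpos, mul_comm]

theorem abs_besselCoeff_le {ν : ℝ} (hν : 0 ≤ ν) (k : ℕ) :
    |besselCoeff ν k| ≤ |besselCoeff ν 0| / k ! := by
  induction k with
  | zero => simp
  | succ k ih =>
    calc |besselCoeff ν (k + 1)| ≤ |besselCoeff ν k| / (k + 1) := abs_besselCoeff_succ_le hν k
      _ ≤ |besselCoeff ν 0| / k ! / (k + 1) := by gcongr
      _ = |besselCoeff ν 0| / (k + 1) ! := by push_cast [factorial_succ]; rw [div_div, mul_comm]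

theorem summable_norm_besselCoeff_mul_pow {ν : ℝ} (hν : 0 ≤ ν) (R : ℝ) :
    Summable fun k => ‖besselCoeff ν k‖ * R ^ k := by
  refine Summable.of_norm_bounded ((summable_pow_div_factorial |R|).mul_left |besselCoeff ν 0|)
    fun k => ?_
  rw [norm_mul, norm_norm, norm_pow, Real.norm_eq_abs, Real.norm_eq_abs, mul_div_assoc',
    mul_div_right_comm]
  gcongr
  exact abs_besselCoeff_le hν k

theorem hasSum_besselSeries {ν : ℝ} (hν : 0 ≤ ν) (t : ℝ) :
    HasSum (fun k => besselCoeff ν k * t ^ k) (besselSeries ν t) :=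
  (Summable.of_norm (by simpa [norm_mul, norm_pow] using
    summable_norm_besselCoeff_mul_pow hν ‖t‖)).hasSum

theorem hasDerivAt_besselSeries {ν : ℝ} (hν : 0 ≤ ν) (t : ℝ) :
    HasDerivAt (besselSeries ν) (-besselSeries (ν + 1) t) t := by
  have h := hasDerivAt_tsum_mul_pow (summable_norm_besselCoeff_mul_pow hν) t
  simp only [succ_mul_besselCoeff_succ, neg_mul, tsum_neg] at h
  exact h

theorem besselSeries_zero (ν : ℝ) : besselSeries ν 0 = 1 / Gamma (ν + 1) := by
  rw [besselSeries, tsum_eq_single 0 fun k hk => by simp [hk]]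
  simp [besselCoeff]

theorem besselSeries_eq_sub {ν : ℝ} (hν : 0 ≤ ν) (t : ℝ) :
    besselSeries ν t = (ν + 1) * besselSeries (ν + 1) t - t * besselSeries (ν + 2) t := by
  have hterm : (fun k : ℕ => ((k + 1 : ℕ) : ℝ) * besselCoeff (ν + 1) (k + 1) * t ^ (k + 1)) =
      fun k => -t * (besselCoeff (ν + 2) k * t ^ k) := by
    funext k
    rw [cast_succ, succ_mul_besselCoeff_succ, show ν + 1 + 1 = ν + 2 by ring]
    ring
  have hshift : HasSum (fun k : ℕ => k * besselCoeff (ν + 1) k * t ^ k)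
      (-t * besselSeries (ν + 2) t) := by
    refine (hasSum_nat_add_iff' 1).1 ?_
    simp only [Finset.range_one, Finset.sum_singleton, cast_zero, zero_mul, sub_zero, hterm]
    exact (hasSum_besselSeries (by linarith) t).mul_left (-t)
  calc besselSeries ν t
      = ∑' k, ((ν + 1) * (besselCoeff (ν + 1) k * t ^ k)
          + k * besselCoeff (ν + 1) k * t ^ k) :=
        tsum_congr fun k => by rw [besselCoeff_eq_mul_besselCoeff_add_one]; ring
    _ = (ν + 1) * besselSeries (ν + 1) t + -t * besselSeries (ν + 2) t :=
        (((hasSum_besselSeries (by linarith) t).mul_left (ν + 1)).add hshift).tsum_eq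
    _ = (ν + 1) * besselSeries (ν + 1) t - t * besselSeries (ν + 2) t := by ring

theorem besselJ_eq_rpow_mul_besselSeries {ν x : ℝ} (hx : 0 < x) :
    besselJ ν x = (x / 2) ^ ν * besselSeries ν ((x / 2) ^ 2) := by
  rw [besselJ, besselSeries, ← tsum_mul_left]
  refine tsum_congr fun k => ?_
  rw [rpow_add (by positivity), show 2 * (k : ℝ) = ((2 * k : ℕ) : ℝ) by push_cast; ring,
    rpow_natCast, pow_mul, besselCoeff]
  ring

theorem hasDerivAt_besselSeries_sq {ν : ℝ} (hν : 0 ≤ ν) (x : ℝ) :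
    HasDerivAt (fun y => besselSeries ν (y ^ 2)) (-(2 * x) * besselSeries (ν + 1) (x ^ 2))
      x := by
  refine ((hasDerivAt_besselSeries hν (x ^ 2)).comp x (hasDerivAt_pow 2 x)).congr_deriv ?_
  push_cast
  ring

theorem hasDerivAt_besselSeries_sq_sub {ν : ℝ} (hν : 0 ≤ ν) (x : ℝ) :
    HasDerivAt (fun y => besselSeries ν (y ^ 2) - y * besselSeries (ν + 1) (y ^ 2))
      ((2 * ν + 1 - 2 * x) * besselSeries (ν + 1) (x ^ 2) - 2 * besselSeries ν (x ^ 2)) x := by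
  have hQ := hasDerivAt_besselSeries_sq (ν := ν + 1) (by linarith) x
  rw [show ν + 1 + 1 = ν + 2 by ring] at hQ
  refine ((hasDerivAt_besselSeries_sq hν x).sub ((hasDerivAt_id x).mul hQ)).congr_deriv ?_
  rw [besselSeries_eq_sub hν, id]
  ring

theorem besselSeries_sq_pos {ν : ℝ} (hν : 0 ≤ ν) {x : ℝ} (hx : 0 ≤ x)
    (hgap : ∀ y ∈ Ico 0 x, y * besselSeries (ν + 1) (y ^ 2) < besselSeries ν (y ^ 2)) :
    0 < besselSeries ν (x ^ 2) := by
  have hW (y : ℝ) : HasDerivAt (fun z => exp (2 * z) * besselSeries ν (z ^ 2))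
      (2 * exp (2 * y) * (besselSeries ν (y ^ 2) - y * besselSeries (ν + 1) (y ^ 2))) y := by
    refine ((((hasDerivAt_id y).const_mul 2).exp).mul
      (hasDerivAt_besselSeries_sq hν y)).congr_deriv ?_
    rw [id]
    ring
  have hmono : MonotoneOn (fun z => exp (2 * z) * besselSeries ν (z ^ 2)) (Icc 0 x) :=
    monotoneOn_of_hasDerivWithinAt_nonneg (convex_Icc 0 x)
      (fun y _ => (hW y).continuousAt.continuousWithinAt) (fun y _ => (hW y).hasDerivWithinAt)
      fun y hy => by
        rw [interior_Icc] at hy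
        have := sub_pos.2 (hgap y (Ioo_subset_Ico_self hy))
        positivity
  have h0 : 0 < exp (2 * 0) * besselSeries ν (0 ^ 2) := by
    rw [zero_pow two_ne_zero, besselSeries_zero]
    have := Gamma_pos_of_pos (show 0 < ν + 1 by linarith)
    positivity
  exact pos_of_mul_pos_right (h0.trans_le (hmono ⟨le_rfl, hx⟩ ⟨hx, le_rfl⟩ hx))
    (exp_pos _).le

theorem mul_besselSeries_add_one_sq_lt {ν : ℝ} (hν : 0 ≤ ν) {x : ℝ} (hx : 0 ≤ x)
    (hxν : x < (2 * ν + 1) / 4) :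
    x * besselSeries (ν + 1) (x ^ 2) < besselSeries ν (x ^ 2) := by
  refine sub_pos.1 <| pos_of_deriv_pos_at_first_zero
    (fun y _ => hasDerivAt_besselSeries_sq_sub hν y) ?_ ?_ x ⟨hx, le_rfl⟩
  · simpa using besselSeries_sq_pos hν le_rfl (by simp)
  intro y hy hzero hpos
  rw [sub_eq_zero] at hzero
  have hP := besselSeries_sq_pos hν hy.1.le fun z hz => sub_pos.1 (hpos z hz)
  have hQ : 0 < besselSeries (ν + 1) (y ^ 2) := pos_of_mul_pos_right (hzero ▸ hP) hy.1.le
  have hcoeff : 0 < 2 * ν + 1 - 4 * y := by linarith [hy.2]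
  rw [hzero]
  linarith [mul_pos hcoeff hQ]

theorem besselJ_add_one_lt_besselJ {ν x : ℝ} (hν : 0 ≤ ν) (hx : 0 < x)
    (hxν : x < ν + 1 / 2) :
    besselJ (ν + 1) x < besselJ ν x := by
  rw [besselJ_eq_rpow_mul_besselSeries hx, besselJ_eq_rpow_mul_besselSeries hx,
    rpow_add_one (by positivity), mul_assoc]
  exact mul_lt_mul_of_pos_left (mul_besselSeries_add_one_sq_lt hν (by positivity) (by linarith))
    (by positivity)

theorem besselJ_gt_general (m : ℕ) (r : ℝ) (hr : 0 < r) (hrm : r ≤ (m : ℝ)) :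
    besselJ ((m : ℝ) + 1 / 2) r > besselJ ((m : ℝ) + 3 / 2) r := by
  have h := besselJ_add_one_lt_besselJ (ν := m + 1 / 2) (by positivity) hr (by linarith)
  rwa [show (m : ℝ) + 1 / 2 + 1 = m + 3 / 2 by ring] at h

theorem besselJ_gt (m : ℕ) (hm : 1 ≤ m) (r : ℝ) (hr : 0 < r) (hrm : r ≤ (m : ℝ)) :
    besselJ ((m : ℝ) + 1 / 2) r > besselJ ((m : ℝ) + 3 / 2) r :=
  besselJ_gt_general m r hr hrm
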